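/- arXiv:2601.05896 — 4 statements merged into one kernel-verified Lean document; each statement's English description precedes it below -/
import Mathlib

section
/- For every complex number s and every integer k ≥ 1, the absolute value of the k-th falling factorial of s divided by k! is at most |s| · k^{|s+1|}; that is, |(s)_k / k!| ≤ |s| · k^{|s+1|}. -/
/-!
Split off the factor `‖s‖ / 1` for `j = 0`. Each remaining factor `‖s - j‖ / (j + 1)` is at most
`1 + ‖s + 1‖ / (j + 1) ≤ exp (‖s + 1‖ / (j + 1))`, so their product is at most
`exp (‖s + 1‖ · ∑_{j=1}^{k-1} 1 / (j + 1)) ≤ exp (‖s + 1‖ · log k) = k ^ ‖s + 1‖`.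
-/

open Finset Real

lemma norm_sub_div_norm_le_exp {E : Type*} [SeminormedAddCommGroup E] (z w : E)
    (hw : 0 < ‖w‖) : ‖z - w‖ / ‖w‖ ≤ exp (‖z‖ / ‖w‖) :=
  calc ‖z - w‖ / ‖w‖ ≤ (‖z‖ + ‖w‖) / ‖w‖ := by gcongr; exact norm_sub_le z w
    _ = ‖z‖ / ‖w‖ + 1 := by rw [add_div, div_self hw.ne']
    _ ≤ exp (‖z‖ / ‖w‖) := add_one_le_exp _

lemma sum_range_inv_add_two_le_log (m : ℕ) :
    ∑ i ∈ range m, ((i : ℝ) + 2)⁻¹ ≤ log (m + 1) := by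
  have h := harmonic_le_one_add_log (m + 1)
  rw [harmonic, sum_range_succ'] at h
  push_cast at h
  norm_num [add_assoc] at h
  linarith

lemma prod_range_norm_sub_div_le_rpow (s : ℂ) (m : ℕ) :
    ∏ i ∈ range m, ‖s - (i + 1)‖ / ((i : ℝ) + 2) ≤ ((m : ℝ) + 1) ^ ‖s + 1‖ := by
  set a := ‖s + 1‖
  have factor_le (i : ℕ) : ‖s - (i + 1)‖ / ((i : ℝ) + 2) ≤ exp (a * ((i : ℝ) + 2)⁻¹) := by
    have hi : ‖((i : ℂ) + 2)‖ = (i : ℝ) + 2 := by exact_mod_cast Complex.norm_natCast (i + 2)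
    have := norm_sub_div_norm_le_exp (s + 1) ((i : ℂ) + 2) (by rw [hi]; positivity)
    rwa [hi, show s + 1 - ((i : ℂ) + 2) = s - (i + 1) by ring] at this
  calc ∏ i ∈ range m, ‖s - (i + 1)‖ / ((i : ℝ) + 2)
      ≤ ∏ i ∈ range m, exp (a * ((i : ℝ) + 2)⁻¹) :=
        prod_le_prod (fun _ _ ↦ by positivity) fun i _ ↦ factor_le i
    _ = exp (a * ∑ i ∈ range m, ((i : ℝ) + 2)⁻¹) := by rw [mul_sum, exp_sum]
    _ ≤ exp (a * log (m + 1)) := by gcongr; exact sum_range_inv_add_two_le_log m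
    _ = ((m : ℝ) + 1) ^ a := by rw [rpow_def_of_pos (by positivity), mul_comm]

lemma norm_prod_range_sub_div_factorial (s : ℂ) (k : ℕ) :
    ‖(∏ j ∈ range k, (s - j)) / (k.factorial : ℂ)‖ = ∏ j ∈ range k, ‖s - j‖ / ((j : ℝ) + 1) := by
  rw [norm_div, norm_prod, Complex.norm_natCast, ← prod_range_add_one_eq_factorial,
    prod_div_distrib]
  push_cast
  rfl

/-- |(s)_k / k!| ≤ |s| · k^{|s+1|} for k ≥ 1, where (s)_k = ∏_{j=0}^{k-1}(s-j). -/
theorem falling_factorial_div_factorial_bound (s : ℂ) (k : ℕ) (hk : 1 ≤ k) :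
    ‖(∏ j ∈ Finset.range k, (s - j)) / (k.factorial : ℂ)‖ ≤
      ‖s‖ * (k : ℝ) ^ (‖s + 1‖) := by
  obtain ⟨m, rfl⟩ : ∃ m, k = m + 1 := ⟨k - 1, by omega⟩
  rw [norm_prod_range_sub_div_factorial, prod_range_succ']
  have tail := prod_range_norm_sub_div_le_rpow s m
  push_cast
  simp only [sub_zero, zero_add, div_one, add_assoc, one_add_one_eq_two] at tail ⊢
  rw [mul_comm]
  gcongr
end

section
/- Let (a_n) be complex numbers and (c_n) complex numbers with |c_n| ≤ 1, and suppose ∑_{n=1}^∞ |a_n| |c_n|^{Re s} converges for all s with Re(s) > S_0. Let σ > 0, σ_{N+1} > 0, C > 0, and suppose |𝓔_k(c_n)| ≤ C |c_n|^{σ_{N+1}} k 2^{-(k-1)} for all k ≥ 1 and n ≥ ν. Then the double series ∑_{k=1}^∞ ((s)_k / k!) ∑_{n=ν}^∞ a_n c_n^{σ s} 𝓔_k(c_n) converges absolutely for every s with Re(s) > (S_0 - σ_{N+1})/σ, and the sum is holomorphic on this half-plane. -/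
open Finset Real

/-!
Fix a point of the half-plane and a neighbourhood `‖s‖ < R`, `t < Re s` of it with
`(S₀ - σ_{N+1}) / σ < t`. There `|(s)ₖ₊₁ / (k+1)!| ≤ R(R+1)⋯(R+k) / (k+1)!`,
`|c^{σ s}| ≤ |c|^{σ t} e^{π σ R}` for `0 < |c| ≤ 1`, and the error bound supplies the factor
`|c|^{σ_{N+1}} (k+1) 2^{-k}`. So the terms are dominated, uniformly on the neighbourhood, by
`(R(R+1)⋯(R+k) / k!) 2^{-k} · |aₙ| |cₙ|^{σ t + σ_{N+1}}`: a product of a sequence summable by the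
ratio test and one summable by hypothesis, since `σ t + σ_{N+1} > S₀`. Weierstrass' theorem on
locally uniform limits of holomorphic functions then applies to the inner sums and to the outer one.
Where `cₙ = 0` the error terms vanish, which takes care of the convention `0 ^ 0 = 1`.
-/

theorem norm_prod_sub_div_factorial_le {s : ℂ} {R : ℝ} (hs : ‖s‖ ≤ R) (m : ℕ) :
    ‖(∏ j ∈ range m, (s - j)) / (m.factorial : ℂ)‖ ≤
      (∏ j ∈ range m, (R + j)) / m.factorial := by
  rw [norm_div, norm_prod, Complex.norm_natCast]
  gcongr with j
  calc ‖s - j‖ ≤ ‖s‖ + ‖(j : ℂ)‖ := norm_sub_le _ _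
    _ ≤ R + j := by rw [Complex.norm_natCast]; gcongr

theorem summable_prod_add_div_factorial_mul_geometric (R : ℝ) {x : ℝ} (hx : |x| < 1) :
    Summable fun k : ℕ =>
      (∏ j ∈ range (k + 1), (R + j)) / (k + 1).factorial * ((k + 1) * x ^ k) := by
  set u := fun k : ℕ =>
    (∏ j ∈ range (k + 1), (R + j)) / (k + 1).factorial * ((k + 1) * x ^ k)
  have hstep (k : ℕ) : u (k + 1) = (R + (k + 1)) * x / (k + 1) * u k := by
    simp only [u, prod_range_succ _ (k + 1), Nat.factorial_succ (k + 1)]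
    push_cast
    field_simp
    ring
  have hlarge : ∀ᶠ k : ℕ in Filter.atTop, 2 * |R| * |x| ≤ (1 - |x|) * (k + 1) := by
    filter_upwards [Filter.eventually_ge_atTop ⌈2 * |R| * |x| / (1 - |x|)⌉₊] with k hk
    have hk' : 2 * |R| * |x| / (1 - |x|) ≤ k + 1 := (Nat.ceil_le.1 hk).trans (by linarith)
    rwa [div_le_iff₀' (by linarith)] at hk'
  refine summable_of_ratio_norm_eventually_le (r := (1 + |x|) / 2) (by linarith) ?_
  filter_upwards [hlarge] with k hk
  rw [hstep, norm_mul]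
  gcongr
  rw [Real.norm_eq_abs, abs_div, abs_mul, abs_of_pos (by positivity : (0 : ℝ) < k + 1),
    div_le_iff₀ (by positivity)]
  have hRk : |R + (k + 1)| ≤ |R| + (k + 1) :=
    (abs_add_le _ _).trans_eq (by rw [abs_of_pos (by positivity : (0 : ℝ) < k + 1)])
  nlinarith [abs_nonneg x]

theorem norm_cpow_le_rpow_mul_exp {z w : ℂ} {r : ℝ} (hz₀ : z ≠ 0) (hz : ‖z‖ ≤ 1)
    (hr : r ≤ w.re) : ‖z ^ w‖ ≤ ‖z‖ ^ r * exp (π * |w.im|) := by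
  calc ‖z ^ w‖ ≤ ‖z‖ ^ w.re / exp (z.arg * w.im) := Complex.norm_cpow_le z w
    _ = ‖z‖ ^ w.re * exp (-(z.arg * w.im)) := by rw [exp_neg, div_eq_mul_inv]
    _ ≤ ‖z‖ ^ r * exp (π * |w.im|) := by
      have harg : -(z.arg * w.im) ≤ π * |w.im| :=
        calc -(z.arg * w.im) ≤ |z.arg| * |w.im| := by rw [← abs_mul]; exact neg_le_abs _
          _ ≤ π * |w.im| := by gcongr; exact Complex.abs_arg_le_pi z
      gcongr ?_ * exp ?_
      exact rpow_le_rpow_of_exponent_ge (norm_pos_iff.2 hz₀) hz hr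

theorem eq_zero_of_norm_le_mul_norm_rpow {F G : Type*} [NormedAddCommGroup F]
    [NormedAddCommGroup G] {e : F} {z : G} {B ρ : ℝ} (hρ : 0 < ρ) (he : ‖e‖ ≤ B * ‖z‖ ^ ρ)
    (hz : z = 0) : e = 0 := by
  simpa [hz, zero_rpow hρ.ne'] using he

theorem norm_mul_cpow_mul_le {a z w E : ℂ} {r ρ B M : ℝ} (hz : ‖z‖ ≤ 1) (hr : r ≤ w.re)
    (hw : |w.im| ≤ M) (hρ : 0 < ρ) (hB : 0 ≤ B) (hE : ‖E‖ ≤ B * ‖z‖ ^ ρ) :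
    ‖a * z ^ w * E‖ ≤ B * exp (π * M) * (‖a‖ * ‖z‖ ^ (r + ρ)) := by
  rcases eq_or_ne z 0 with hz₀ | hz₀
  · rw [eq_zero_of_norm_le_mul_norm_rpow hρ hE hz₀, mul_zero, norm_zero]
    positivity
  · have hpow : ‖z ^ w‖ ≤ ‖z‖ ^ r * exp (π * M) :=
      (norm_cpow_le_rpow_mul_exp hz₀ hz hr).trans (by gcongr)
    calc ‖a * z ^ w * E‖ = ‖a‖ * ‖z ^ w‖ * ‖E‖ := by rw [norm_mul, norm_mul]
      _ ≤ ‖a‖ * (‖z‖ ^ r * exp (π * M)) * (B * ‖z‖ ^ ρ) := by gcongr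
      _ = B * exp (π * M) * (‖a‖ * ‖z‖ ^ (r + ρ)) := by
        rw [rpow_add (norm_pos_iff.2 hz₀)]; ring

theorem differentiable_mul_cpow_mul {a z E : ℂ} {g : ℂ → ℂ} (hg : Differentiable ℂ g)
    (hE : z = 0 → E = 0) : Differentiable ℂ fun s => a * z ^ g s * E := by
  rcases eq_or_ne z 0 with hz | hz
  · simp only [hE hz, mul_zero]
    exact differentiable_const 0
  · exact ((differentiable_const a).mul (hg.const_cpow (Or.inl hz))).mul_const E

/-- Majorants, uniform on `U`, for the double series `∑ₖ bₖ(s) ∑ₙ fₖₙ(s)`. -/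
structure DoubleSeriesMajorant (U : Set ℂ) (b : ℕ → ℂ → ℂ) (f : ℕ → ℕ → ℂ → ℂ)
    (β γ δ : ℕ → ℝ) : Prop where
  nonneg_left : ∀ k, 0 ≤ γ k
  nonneg_right : ∀ n, 0 ≤ δ n
  summable_left : Summable fun k => β k * γ k
  summable_right : Summable δ
  norm_coeff_le : ∀ k, ∀ s ∈ U, ‖b k s‖ ≤ β k
  norm_term_le : ∀ k n, ∀ s ∈ U, ‖f k n s‖ ≤ γ k * δ n

namespace DoubleSeriesMajorant

variable {U : Set ℂ} {b : ℕ → ℂ → ℂ} {f : ℕ → ℕ → ℂ → ℂ} {β γ δ : ℕ → ℝ}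

theorem summable_norm_mul (h : DoubleSeriesMajorant U b f β γ δ) {s : ℂ} (hs : s ∈ U) :
    Summable fun p : ℕ × ℕ => ‖b p.1 s * f p.1 p.2 s‖ := by
  have hβ (k : ℕ) : 0 ≤ β k := (norm_nonneg _).trans (h.norm_coeff_le k s hs)
  refine .of_nonneg_of_le (fun _ => norm_nonneg _) (fun p => ?_)
    (h.summable_left.mul_of_nonneg h.summable_right
      (fun k => mul_nonneg (hβ k) (h.nonneg_left k)) h.nonneg_right)
  calc ‖b p.1 s * f p.1 p.2 s‖ = ‖b p.1 s‖ * ‖f p.1 p.2 s‖ := norm_mul _ _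
    _ ≤ β p.1 * (γ p.1 * δ p.2) :=
      mul_le_mul (h.norm_coeff_le _ s hs) (h.norm_term_le _ _ s hs) (norm_nonneg _) (hβ _)
    _ = β p.1 * γ p.1 * δ p.2 := (mul_assoc _ _ _).symm

theorem norm_tsum_term_le (h : DoubleSeriesMajorant U b f β γ δ) (k : ℕ) {s : ℂ} (hs : s ∈ U) :
    ‖∑' n, f k n s‖ ≤ γ k * ∑' n, δ n :=
  tsum_of_norm_bounded (h.summable_right.hasSum.mul_left (γ k)) fun n => h.norm_term_le k n s hs

theorem differentiableOn_tsum (h : DoubleSeriesMajorant U b f β γ δ) (hU : IsOpen U)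
    (hb : ∀ k, DifferentiableOn ℂ (b k) U) (hf : ∀ k n, DifferentiableOn ℂ (f k n) U) :
    DifferentiableOn ℂ (fun s => ∑' k, b k s * ∑' n, f k n s) U := by
  have hinner (k : ℕ) : DifferentiableOn ℂ (fun s => ∑' n, f k n s) U :=
    Complex.differentiableOn_tsum_of_summable_norm (h.summable_right.mul_left (γ k)) (hf k) hU
      (h.norm_term_le k)
  refine Complex.differentiableOn_tsum_of_summable_norm
    (h.summable_left.mul_right (∑' n, δ n)) (fun k => (hb k).mul (hinner k)) hU
    fun k s hs => ?_
  calc ‖b k s * ∑' n, f k n s‖ = ‖b k s‖ * ‖∑' n, f k n s‖ := norm_mul _ _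
    _ ≤ β k * (γ k * ∑' n, δ n) :=
      mul_le_mul (h.norm_coeff_le k s hs) (h.norm_tsum_term_le k hs) (norm_nonneg _)
        ((norm_nonneg _).trans (h.norm_coeff_le k s hs))
    _ = β k * γ k * ∑' n, δ n := (mul_assoc _ _ _).symm

end DoubleSeriesMajorant

theorem exists_errorSeries_majorant {a c : ℕ → ℂ} (hc : ∀ n, ‖c n‖ ≤ 1) {S₀ : ℝ}
    (hconv : ∀ x : ℝ, S₀ < x → Summable fun n => ‖a n‖ * ‖c n‖ ^ x)
    {σ ρ C : ℝ} (hσ : 0 < σ) (hρ : 0 < ρ) (hC : 0 ≤ C) {E : ℕ → ℕ → ℂ}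
    (hE : ∀ k n, ‖E k n‖ ≤ C * ((k + 1) * (1 / 2) ^ k) * ‖c n‖ ^ ρ)
    {s₀ : ℂ} (hs₀ : (S₀ - ρ) / σ < s₀.re) :
    ∃ U, IsOpen U ∧ s₀ ∈ U ∧ ∃ β γ δ : ℕ → ℝ, DoubleSeriesMajorant U
      (fun k s => (∏ j ∈ range (k + 1), (s - j)) / ((k + 1).factorial : ℂ))
      (fun k n s => a n * c n ^ ((σ : ℂ) * s) * E k n) β γ δ := by
  obtain ⟨t, ht, hts₀⟩ := exists_between hs₀
  set R := ‖s₀‖ + 1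
  refine ⟨Metric.ball 0 R ∩ {s | t < s.re},
    Metric.isOpen_ball.inter (isOpen_lt continuous_const Complex.continuous_re),
    ⟨by simp [R], hts₀⟩, fun k => (∏ j ∈ range (k + 1), (R + j)) / (k + 1).factorial,
    fun k => C * ((k + 1) * (1 / 2) ^ k) * exp (π * (σ * R)),
    fun n => ‖a n‖ * ‖c n‖ ^ (σ * t + ρ), ⟨fun k => by positivity, fun n => by positivity,
    ?_, hconv _ ?_, fun k s hs => ?_, fun k n s hs => ?_⟩⟩
  · refine ((summable_prod_add_div_factorial_mul_geometric R (x := 1 / 2) (by norm_num)).mul_right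
      (C * exp (π * (σ * R)))).congr fun k => ?_
    ring
  · rw [div_lt_iff₀ hσ] at ht
    linarith
  · exact norm_prod_sub_div_factorial_le (mem_ball_zero_iff.1 hs.1).le (k + 1)
  · refine norm_mul_cpow_mul_le (hc n) ?_ ?_ hρ (by positivity) (hE k n)
    · rw [Complex.re_ofReal_mul]
      exact mul_le_mul_of_nonneg_left hs.2.le hσ.le
    · rw [Complex.im_ofReal_mul, abs_mul, abs_of_pos hσ]
      exact mul_le_mul_of_nonneg_left
        ((Complex.abs_im_le_norm s).trans (mem_ball_zero_iff.1 hs.1).le) hσ.le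

/-- The part of the Dirichlet series coming from the error terms 𝓔_k is absolutely
convergent and holomorphic on the half-plane Re(s) > (S₀ - σ_{N+1})/σ. -/
theorem error_part_holomorphic (a : ℕ → ℂ) (c : ℕ → ℂ) (hc : ∀ n, ‖c n‖ ≤ 1)
    (S₀ : ℝ)
    (hconv : ∀ s : ℂ, S₀ < s.re →
      Summable (fun n : ℕ => ‖a n‖ * ‖c n‖ ^ s.re))
    (σ σN1 C : ℝ) (hσ : 0 < σ) (hσN1 : 0 < σN1) (hC : 0 < C)
    (𝓔 : ℕ → ℂ → ℂ) (ν : ℕ)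
    (h𝓔 : ∀ k : ℕ, 1 ≤ k → ∀ n : ℕ, ν ≤ n →
      ‖𝓔 k (c n)‖ ≤
        C * ‖c n‖ ^ σN1 * k * (1 / 2 : ℝ) ^ (k - 1)) :
    (∀ s : ℂ, (S₀ - σN1) / σ < s.re →
      Summable (fun p : ℕ × ℕ =>
        ‖
          (((∏ j ∈ Finset.range (p.1 + 1), (s - j)) / ((p.1 + 1).factorial : ℂ)) *
            (a (p.2 + ν) * (c (p.2 + ν)) ^ ((σ : ℂ) * s) * 𝓔 (p.1 + 1) (c (p.2 + ν))))‖)) ∧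
    DifferentiableOn ℂ
      (fun s : ℂ => ∑' k : ℕ,
        ((∏ j ∈ Finset.range (k + 1), (s - j)) / ((k + 1).factorial : ℂ)) *
          ∑' n : ℕ, a (n + ν) * (c (n + ν)) ^ ((σ : ℂ) * s) * 𝓔 (k + 1) (c (n + ν)))
      {s : ℂ | (S₀ - σN1) / σ < s.re} := by
  have hE (k n : ℕ) :
      ‖𝓔 (k + 1) (c (n + ν))‖ ≤ C * ((k + 1) * (1 / 2) ^ k) * ‖c (n + ν)‖ ^ σN1 := by
    have h := h𝓔 (k + 1) le_add_self (n + ν) le_add_self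
    push_cast [Nat.add_sub_cancel] at h
    linarith
  have hconv' (x : ℝ) (hx : S₀ < x) : Summable fun n => ‖a (n + ν)‖ * ‖c (n + ν)‖ ^ x :=
    (summable_nat_add_iff (f := fun n => ‖a n‖ * ‖c n‖ ^ x) ν).2 <| by
      simpa using hconv x (by simpa using hx)
  have hmaj {s₀ : ℂ} (hs₀ : (S₀ - σN1) / σ < s₀.re) :=
    exists_errorSeries_majorant (fun n => hc (n + ν)) hconv' hσ hσN1 hC.le hE hs₀
  refine ⟨fun s hs => ?_, fun s hs => ?_⟩
  · obtain ⟨U, -, hsU, β, γ, δ, h⟩ := hmaj hs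
    exact h.summable_norm_mul hsU
  · obtain ⟨U, hU, hsU, β, γ, δ, h⟩ := hmaj hs
    refine ((h.differentiableOn_tsum hU (fun k => ?_) (fun k n => ?_)).differentiableAt
      (hU.mem_nhds hsU)).differentiableWithinAt
    · exact ((Differentiable.fun_finsetProd fun j _ => differentiable_id.sub_const _).div_const
        _).differentiableOn
    · exact (differentiable_mul_cpow_mul (differentiable_id.const_mul _)
        (eq_zero_of_norm_le_mul_norm_rpow hσN1 (hE k n))).differentiableOn
end

section
/- Let α_1,…,α_N ∈ ℂ, 0 < σ_1 < ⋯ < σ_{N+1}, and δ > 0 with ∑_{j=1}^N |α_j| δ^{σ_j} ≤ 1/2. Let k* = ⌈σ_{N+1}/σ_1⌉, and let 0 ≤ t < δ. Then for every k > k*, ∑_{k_1+⋯+k_N = k} (k choose k_1,…,k_N) (∏_j |α_j|^{k_j}) t^{∑_j σ_j k_j} ≤ 2^{-k} δ^{-σ_{N+1}} t^{σ_{N+1}}. -/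
/-!
Split `t ^ (∑ σ_j k_j) = δ ^ (∑ σ_j k_j) · (t/δ) ^ (∑ σ_j k_j)`. Since `k > σ_{N+1}/σ_1` and every
`σ_j ≥ σ_1`, the exponent `∑ σ_j k_j ≥ σ_1 k` exceeds `σ_{N+1}`, so as `t/δ ≤ 1` the second factor is
at most `(t/δ) ^ σ_{N+1}`. The first factor distributes over the monomial, and the multinomial
theorem sums what is left to `(∑ |α_j| δ ^ σ_j) ^ k ≤ 2 ^ (-k)`.
-/

open Finset

lemma rpow_le_rpow_mul_div_rpow_of_le {t δ s S : ℝ} (ht : 0 ≤ t) (htδ : t ≤ δ) (hδ : 0 < δ)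
    (hS : 0 ≤ S) (hSs : S ≤ s) : t ^ s ≤ δ ^ s * (t / δ) ^ S :=
  calc t ^ s = δ ^ s * (t / δ) ^ s := by
        rw [Real.div_rpow ht hδ.le, mul_div_cancel₀ _ (Real.rpow_pos_of_pos hδ s).ne']
    _ ≤ δ ^ s * (t / δ) ^ S := by
        refine mul_le_mul_of_nonneg_left ?_ (by positivity)
        exact Real.rpow_le_rpow_of_exponent_ge' (by positivity) ((div_le_one hδ).2 htδ) hS hSs

lemma Real.rpow_sum_mul_natCast_of_pos {ι : Type*} (s : Finset ι) {x : ℝ} (hx : 0 < x)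
    (w : ι → ℝ) (n : ι → ℕ) : x ^ (∑ i ∈ s, w i * (n i : ℝ)) = ∏ i ∈ s, (x ^ w i) ^ n i := by
  rw [Real.rpow_sum_of_pos hx]
  simp_rw [Real.rpow_mul_natCast hx.le]

lemma mul_sum_natCast_le_sum_mul {ι : Type*} (s : Finset ι) {c : ℝ} {w : ι → ℝ}
    (hw : ∀ i ∈ s, c ≤ w i) (n : ι → ℕ) : c * (∑ i ∈ s, n i : ℕ) ≤ ∑ i ∈ s, w i * (n i : ℝ) := by
  rw [Nat.cast_sum, mul_sum]
  exact sum_le_sum fun i hi => mul_le_mul_of_nonneg_right (hw i hi) (Nat.cast_nonneg _)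

theorem sum_antidiagonalTuple_multinomial_mul_rpow_le {N k : ℕ} {a : Fin N → ℝ}
    (ha : ∀ j, 0 ≤ a j) (w : Fin N → ℝ) {t δ S : ℝ} (ht : 0 ≤ t) (htδ : t ≤ δ) (hδ : 0 < δ)
    (hS : 0 ≤ S) (hSw : ∀ f ∈ Nat.antidiagonalTuple N k, S ≤ ∑ j, w j * (f j : ℝ)) :
    ∑ f ∈ Nat.antidiagonalTuple N k,
        (Nat.multinomial univ f : ℝ) * (∏ j, a j ^ f j) * t ^ (∑ j, w j * (f j : ℝ)) ≤
      (∑ j, a j * δ ^ w j) ^ k * (t / δ) ^ S := by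
  rw [sum_pow_eq_sum_piAntidiag, piAntidiag_univ_fin_eq_antidiagonalTuple, sum_mul]
  refine sum_le_sum fun f hf => ?_
  calc (Nat.multinomial univ f : ℝ) * (∏ j, a j ^ f j) * t ^ (∑ j, w j * (f j : ℝ))
      ≤ (Nat.multinomial univ f : ℝ) * (∏ j, a j ^ f j) *
          (δ ^ (∑ j, w j * (f j : ℝ)) * (t / δ) ^ S) := by
        refine mul_le_mul_of_nonneg_left ?_ ?_
        · exact rpow_le_rpow_mul_div_rpow_of_le ht htδ hδ hS (hSw f hf)
        · exact mul_nonneg (Nat.cast_nonneg _) (prod_nonneg fun j _ => pow_nonneg (ha j) _)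
    _ = (Nat.multinomial univ f : ℝ) * (∏ j, (a j * δ ^ w j) ^ f j) * (t / δ) ^ S := by
        simp_rw [Real.rpow_sum_mul_natCast_of_pos univ hδ, mul_pow, prod_mul_distrib]
        ring

/-- Tail multinomial estimate: for k > k* = ⌈σ_{N+1}/σ₁⌉ and 0 ≤ t < δ with
∑_j |α_j| δ^{σ_j} ≤ 1/2, one has
∑_{k₁+⋯+k_N=k} (k choose k⃗) ∏|α_j|^{k_j} t^{∑σ_j k_j} ≤ 2^{-k} δ^{-σ_{N+1}} t^{σ_{N+1}}. -/
theorem tail_multinomial_estimate (N : ℕ) (α : Fin N → ℂ) (σ : Fin (N + 1) → ℝ)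
    (hσ : StrictMono σ) (hσ0 : 0 < σ 0) (δ : ℝ) (hδ : 0 < δ)
    (hsmall : ∑ j, ‖α j‖ * δ ^ σ j.castSucc ≤ 1 / 2)
    (t : ℝ) (ht0 : 0 ≤ t) (htδ : t < δ)
    (k : ℕ) (hk : ⌈σ (Fin.last N) / σ 0⌉₊ < k) :
    ∑ f ∈ Finset.Nat.antidiagonalTuple N k,
        (Nat.multinomial Finset.univ f : ℝ) * (∏ j, ‖α j‖ ^ f j) *
          t ^ (∑ j, σ j.castSucc * (f j : ℝ)) ≤
      (2 : ℝ) ^ (-(k : ℝ)) * δ ^ (-σ (Fin.last N)) * t ^ σ (Fin.last N) := by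
  set S := σ (Fin.last N)
  have hS : 0 < S := hσ0.trans_le (hσ.monotone (Fin.zero_le _))
  have hSk : S < σ 0 * k := by
    have := Nat.lt_of_ceil_lt hk
    rwa [div_lt_iff₀ hσ0, mul_comm] at this
  have hexp : ∀ f ∈ Nat.antidiagonalTuple N k, S ≤ ∑ j, σ j.castSucc * (f j : ℝ) := by
    intro f hf
    have := mul_sum_natCast_le_sum_mul univ (fun j _ => hσ.monotone (Fin.zero_le j.castSucc)) f
    rw [Nat.mem_antidiagonalTuple.mp hf] at this
    linarith
  calc _ ≤ (∑ j, ‖α j‖ * δ ^ σ j.castSucc) ^ k * (t / δ) ^ S :=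
        sum_antidiagonalTuple_multinomial_mul_rpow_le (fun j => norm_nonneg _) _ ht0 htδ.le hδ
          hS.le hexp
    _ ≤ (1 / 2) ^ k * (t / δ) ^ S := by gcongr
    _ = 2 ^ (-(k : ℝ)) * δ ^ (-S) * t ^ S := by
        rw [Real.div_rpow ht0 hδ.le, Real.rpow_neg hδ.le, Real.rpow_neg zero_le_two,
          Real.rpow_natCast, one_div, inv_pow]
        ring
end

section
/- Under the hypotheses: (a_n) ⊂ ℂ, (c_n) positive reals with c_n < δ for n ≥ ν, ∑_n |a_n| c_n^{t} < ∞ for all t > S_0, σ > 0, 0 < σ_1 < ⋯ < σ_{N+1}, α_j ∈ ℂ with ∑_j |α_j| δ^{σ_j} ≤ 1/2, and k* = ⌈σ_{N+1}/σ_1⌉; define D_ν(s) = ∑_{n=ν}^∞ a_n c_n^s for Re(s) > S_0. Then the series ∑_{k=k*+1}^∞ ((s)_k/k!) ∑_{k_1+⋯+k_N=k} (k choose k_1,…,k_N)(∏_j α_j^{k_j}) D_ν(σ s + ∑_j σ_j k_j) converges absolutely for all s with Re(s) > (S_0 - σ_{N+1})/σ, and defines a holomorphic function on that half-plane. -/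
/-!
If `0 < c_n ≤ δ` and `t ≤ Re w`, then `|c_n ^ w| ≤ c_n ^ t δ ^ (Re w - t)`. For `k ≥ k*` every
exponent `∑ σ_j k_j` with `∑ k_j = k` is at least `σ_{N+1}`, so with `t = σ Re s + σ_{N+1}` this
bounds `|D_ν(σ s + ∑ σ_j k_j)|` by `M(t) δ^(-σ_{N+1}) ∏ (δ^σ_j)^k_j`, where
`M(t) = ∑ |a_n| c_n^t`. By the multinomial theorem the inner sum is then at most
`M(t) δ^(-σ_{N+1}) (∑ |α_j| δ^σ_j)^k ≤ M(t) δ^(-σ_{N+1}) 2^(-k)`, while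
`|(s)_k / k!| ≤ |s|(|s|+1)⋯(|s|+k-1) / k!`, and the product of the latter with `2^(-k)` is
summable by the ratio test. As `c^t ≤ c^t₀ + c^t₁` for `t ∈ [t₀, t₁]`, `M` is bounded on compact
intervals, so all bounds are uniform on compact sets and the Weierstrass M-test gives
holomorphy.
-/

open Finset Filter Topology

lemma norm_prod_range_sub_natCast_le (s : ℂ) (m : ℕ) :
    ‖∏ j ∈ range m, (s - j)‖ ≤ ∏ j ∈ range m, (‖s‖ + j) := by
  rw [norm_prod]
  gcongr with j
  exact (norm_sub_le _ _).trans_eq (by rw [Complex.norm_natCast])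

lemma summable_prod_range_add_div_factorial_mul_pow {R x : ℝ} (hR : 0 ≤ R) (hx₀ : 0 ≤ x)
    (hx₁ : x < 1) :
    Summable fun m : ℕ => (∏ j ∈ range m, (R + j)) / m.factorial * x ^ m := by
  have hratio : Tendsto (fun m : ℕ => (R + 1 * m) / (1 + 1 * m) * x) atTop (𝓝 (1 / 1 * x)) :=
    (tendsto_add_mul_div_add_mul_atTop_nhds R 1 1 one_ne_zero).mul_const x
  refine summable_of_ratio_norm_eventually_le (r := (1 + x) / 2) (by linarith) ?_
  filter_upwards [hratio.eventually_le_const (show 1 / 1 * x < (1 + x) / 2 by linarith)] with m hm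
  have hterm : 0 ≤ (∏ j ∈ range m, (R + j)) / m.factorial * x ^ m := by positivity
  rw [Real.norm_of_nonneg hterm, Real.norm_of_nonneg (by positivity), prod_range_succ,
    Nat.factorial_succ, pow_succ, mul_comm ((1 + x) / 2)]
  calc _ = (∏ j ∈ range m, (R + j)) / m.factorial * x ^ m * ((R + 1 * m) / (1 + 1 * m) * x) := by
          push_cast; field_simp; ring
    _ ≤ _ := mul_le_mul_of_nonneg_left hm hterm

lemma sum_antidiagonalTuple_multinomial_mul_prod_pow {R : Type*} [CommSemiring R] {N : ℕ}
    (x : Fin N → R) (m : ℕ) :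
    ∑ f ∈ Finset.Nat.antidiagonalTuple N m, (Nat.multinomial univ f : R) * ∏ j, x j ^ f j =
      (∑ j, x j) ^ m := by
  rw [sum_pow_eq_sum_piAntidiag, piAntidiag_univ_fin_eq_antidiagonalTuple]

lemma le_sum_mul_of_ceil_div_le {N m : ℕ} {τ : Fin N → ℝ} {τ₀ T : ℝ} (hτ₀ : 0 < τ₀)
    (hτ : ∀ j, τ₀ ≤ τ j) (hm : ⌈T / τ₀⌉₊ ≤ m) {f : Fin N → ℕ}
    (hf : f ∈ Finset.Nat.antidiagonalTuple N m) :
    T ≤ ∑ j, τ j * f j := by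
  rw [Finset.Nat.mem_antidiagonalTuple] at hf
  calc T ≤ τ₀ * m := by
        rw [← div_le_iff₀' hτ₀]; exact (Nat.le_ceil _).trans (by exact_mod_cast hm)
    _ = ∑ j, τ₀ * f j := by rw [← mul_sum, ← hf, Nat.cast_sum]
    _ ≤ ∑ j, τ j * f j := by gcongr with j; exact hτ j

lemma Real.rpow_le_rpow_add_rpow {c t₀ t t₁ : ℝ} (hc : 0 < c) (h₀ : t₀ ≤ t) (h₁ : t ≤ t₁) :
    c ^ t ≤ c ^ t₀ + c ^ t₁ := by
  rcases le_total 1 c with h | h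
  · exact (Real.rpow_le_rpow_of_exponent_le h h₁).trans (le_add_of_nonneg_left (by positivity))
  · exact (Real.rpow_le_rpow_of_exponent_ge hc h h₀).trans (le_add_of_nonneg_right (by positivity))

lemma Real.rpow_le_rpow_mul_rpow_sub {d δ t w : ℝ} (hd : 0 < d) (hdδ : d ≤ δ) (htw : t ≤ w) :
    d ^ w ≤ d ^ t * δ ^ (w - t) := by
  calc d ^ w = d ^ t * d ^ (w - t) := by rw [← Real.rpow_add hd, add_sub_cancel]
    _ ≤ d ^ t * δ ^ (w - t) := by gcongr

lemma norm_mul_ofReal_cpow (z : ℂ) {x : ℝ} (hx : 0 < x) (w : ℂ) :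
    ‖z * (x : ℂ) ^ w‖ = ‖z‖ * x ^ w.re := by
  rw [norm_mul, Complex.norm_cpow_eq_rpow_re_of_pos hx]

lemma Complex.re_ofReal_mul_add_ofReal (σ x : ℝ) (s : ℂ) :
    ((σ : ℂ) * s + (x : ℂ)).re = σ * s.re + x := by
  simp

section DirichletSeries

variable {b : ℕ → ℂ} {d : ℕ → ℝ}

lemma differentiableOn_tsum_mul_cpow {S₀ : ℝ} (hd : ∀ n, 0 < d n)
    (hb : ∀ t, S₀ < t → Summable fun n => ‖b n‖ * d n ^ t) :
    DifferentiableOn ℂ (fun w : ℂ => ∑' n, b n * (d n : ℂ) ^ w) {w : ℂ | S₀ < w.re} := by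
  refine differentiableOn_of_locally_differentiableOn fun w₀ hw₀ => ?_
  obtain ⟨t₀, hS₀t₀, ht₀w₀⟩ := exists_between (show S₀ < w₀.re from hw₀)
  have hstrip : IsOpen {w : ℂ | t₀ < w.re ∧ w.re < w₀.re + 1} :=
    (isOpen_lt continuous_const Complex.continuous_re).inter
      (isOpen_lt Complex.continuous_re continuous_const)
  refine ⟨_, hstrip, ⟨ht₀w₀, lt_add_one _⟩, ?_⟩
  refine (Complex.differentiableOn_tsum_of_summable_norm
    ((hb t₀ hS₀t₀).add (hb (w₀.re + 1) (by linarith))) (fun n => ?_) hstrip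
    fun n w hw => ?_).mono Set.inter_subset_right
  · exact ((differentiable_id.const_cpow
      (Or.inl (Complex.ofReal_ne_zero.2 (hd n).ne'))).const_mul _).differentiableOn
  · rw [norm_mul_ofReal_cpow _ (hd n), ← mul_add]
    exact mul_le_mul_of_nonneg_left (Real.rpow_le_rpow_add_rpow (hd n) hw.1.le hw.2.le)
      (norm_nonneg _)

lemma norm_tsum_mul_cpow_le {δ t : ℝ} {w : ℂ} (hd : ∀ n, 0 < d n) (hdδ : ∀ n, d n ≤ δ)
    (hb : Summable fun n => ‖b n‖ * d n ^ t) (htw : t ≤ w.re) :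
    ‖∑' n, b n * (d n : ℂ) ^ w‖ ≤ (∑' n, ‖b n‖ * d n ^ t) * δ ^ (w.re - t) := by
  rw [← tsum_mul_right]
  refine tsum_of_norm_bounded (hb.mul_right _).hasSum fun n => ?_
  rw [norm_mul_ofReal_cpow _ (hd n), mul_assoc]
  exact mul_le_mul_of_nonneg_left (Real.rpow_le_rpow_mul_rpow_sub (hd n) (hdδ n) htw)
    (norm_nonneg _)

lemma tsum_norm_mul_rpow_nonneg (hd : ∀ n, 0 < d n) (t : ℝ) : 0 ≤ ∑' n, ‖b n‖ * d n ^ t :=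
  tsum_nonneg fun n => mul_nonneg (norm_nonneg _) (Real.rpow_nonneg (hd n).le _)

lemma tsum_norm_mul_rpow_le_add {t₀ t t₁ : ℝ} (hd : ∀ n, 0 < d n)
    (h₀ : Summable fun n => ‖b n‖ * d n ^ t₀) (h₁ : Summable fun n => ‖b n‖ * d n ^ t₁)
    (ht₀ : t₀ ≤ t) (ht₁ : t ≤ t₁) :
    ∑' n, ‖b n‖ * d n ^ t ≤ ∑' n, ‖b n‖ * d n ^ t₀ + ∑' n, ‖b n‖ * d n ^ t₁ := by
  have hle : ∀ n, ‖b n‖ * d n ^ t ≤ ‖b n‖ * d n ^ t₀ + ‖b n‖ * d n ^ t₁ := fun n => by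
    rw [← mul_add]
    exact mul_le_mul_of_nonneg_left (Real.rpow_le_rpow_add_rpow (hd n) ht₀ ht₁) (norm_nonneg _)
  have ht : Summable fun n => ‖b n‖ * d n ^ t := (h₀.add h₁).of_nonneg_of_le
    (fun n => mul_nonneg (norm_nonneg _) (Real.rpow_nonneg (hd n).le _)) hle
  rw [← h₀.tsum_add h₁]
  exact ht.tsum_le_tsum hle (h₀.add h₁)

end DirichletSeries

section MultinomialShift

variable {N : ℕ} (α : Fin N → ℂ) (τ : Fin N → ℝ) (σ : ℝ) (D : ℂ → ℂ)

noncomputable def multinomialShiftSum (s : ℂ) (m : ℕ) : ℂ :=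
  ∑ f ∈ Finset.Nat.antidiagonalTuple N m,
    (Nat.multinomial univ f : ℂ) * (∏ j, α j ^ f j) *
      D (σ * s + ((∑ j, τ j * (f j : ℝ) : ℝ) : ℂ))

noncomputable def multinomialShiftNormSum (s : ℂ) (m : ℕ) : ℝ :=
  ∑ f ∈ Finset.Nat.antidiagonalTuple N m,
    (Nat.multinomial univ f : ℝ) * (∏ j, ‖α j‖ ^ f j) *
      ‖D (σ * s + ((∑ j, τ j * (f j : ℝ) : ℝ) : ℂ))‖

variable {α τ σ D}

lemma multinomialShiftNormSum_nonneg (s : ℂ) (m : ℕ) :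
    0 ≤ multinomialShiftNormSum α τ σ D s m :=
  sum_nonneg fun _ _ => by positivity

lemma norm_multinomialShiftSum_le (s : ℂ) (m : ℕ) :
    ‖multinomialShiftSum α τ σ D s m‖ ≤ multinomialShiftNormSum α τ σ D s m := by
  refine (norm_sum_le _ _).trans_eq (sum_congr rfl fun f _ => ?_)
  simp only [norm_mul, norm_prod, norm_pow, Complex.norm_natCast]

variable {τ₀ T : ℝ} {m : ℕ}

lemma differentiableOn_multinomialShiftSum {S₀ : ℝ} (hτ₀ : 0 < τ₀) (hτ : ∀ j, τ₀ ≤ τ j)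
    (hm : ⌈T / τ₀⌉₊ ≤ m) (hD : DifferentiableOn ℂ D {w : ℂ | S₀ < w.re}) :
    DifferentiableOn ℂ (fun s => multinomialShiftSum α τ σ D s m)
      {s : ℂ | S₀ < σ * s.re + T} := by
  refine DifferentiableOn.fun_sum fun f hf => (differentiableOn_const _).mul ?_
  refine hD.comp (((differentiable_id.const_mul _).add_const _).differentiableOn) fun s hs => ?_
  have := le_sum_mul_of_ceil_div_le hτ₀ hτ hm hf
  simp only [Set.mem_ofPred_eq, Complex.re_ofReal_mul_add_ofReal] at hs ⊢
  linarith

lemma multinomialShiftNormSum_le {s : ℂ} {δ M : ℝ} (hδ : 0 < δ) (hτ₀ : 0 < τ₀)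
    (hτ : ∀ j, τ₀ ≤ τ j) (hm : ⌈T / τ₀⌉₊ ≤ m)
    (hD : ∀ w : ℂ, σ * s.re + T ≤ w.re → ‖D w‖ ≤ M * δ ^ (w.re - (σ * s.re + T))) :
    multinomialShiftNormSum α τ σ D s m ≤ M * δ ^ (-T) * (∑ j, ‖α j‖ * δ ^ τ j) ^ m := by
  rw [← sum_antidiagonalTuple_multinomial_mul_prod_pow, mul_sum]
  refine sum_le_sum fun f hf => ?_
  have hT := le_sum_mul_of_ceil_div_le hτ₀ hτ hm hf
  have hδpow : δ ^ (∑ j, τ j * (f j : ℝ) - T) = δ ^ (-T) * ∏ j, (δ ^ τ j) ^ f j := by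
    rw [sub_eq_neg_add, Real.rpow_add hδ, Real.rpow_sum_of_pos hδ]
    simp only [Real.rpow_mul_natCast hδ.le]
  calc _ ≤ (Nat.multinomial univ f : ℝ) * (∏ j, ‖α j‖ ^ f j) *
        (M * δ ^ (-T) * ∏ j, (δ ^ τ j) ^ f j) := by
        gcongr
        refine (hD _ (by rw [Complex.re_ofReal_mul_add_ofReal]; linarith)).trans_eq ?_
        rw [Complex.re_ofReal_mul_add_ofReal, add_sub_add_left_eq_sub, hδpow, mul_assoc]
    _ = _ := by simp only [mul_pow, prod_mul_distrib]; ring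

end MultinomialShift

section Tail

variable {N : ℕ} {α : Fin N → ℂ} {τ : Fin N → ℝ} {b : ℕ → ℂ} {d : ℕ → ℝ} {D : ℂ → ℂ}
  {S₀ δ σ τ₀ T : ℝ}
  (hd : ∀ n, 0 < d n) (hdδ : ∀ n, d n ≤ δ) (hb : ∀ t, S₀ < t → Summable fun n => ‖b n‖ * d n ^ t)
  (hD : ∀ w : ℂ, S₀ < w.re → D w = ∑' n, b n * (d n : ℂ) ^ w)
  (hτ₀ : 0 < τ₀) (hτ : ∀ j, τ₀ ≤ τ j)
include hd hdδ hb hD hτ₀ hτ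

lemma norm_prod_div_factorial_mul_multinomialShiftNormSum_le {s : ℂ} {m : ℕ}
    (hs : S₀ < σ * s.re + T) (hm : ⌈T / τ₀⌉₊ ≤ m) :
    ‖(∏ j ∈ range m, (s - j)) / (m.factorial : ℂ)‖ * multinomialShiftNormSum α τ σ D s m ≤
      (∑' n, ‖b n‖ * d n ^ (σ * s.re + T)) * δ ^ (-T) *
        ((∏ j ∈ range m, (‖s‖ + j)) / m.factorial * (∑ j, ‖α j‖ * δ ^ τ j) ^ m) := by
  have hδ : 0 < δ := (hd 0).trans_le (hdδ 0)
  have hpoch : ‖(∏ j ∈ range m, (s - j)) / (m.factorial : ℂ)‖ ≤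
      (∏ j ∈ range m, (‖s‖ + j)) / m.factorial := by
    rw [norm_div, Complex.norm_natCast]
    gcongr
    exact norm_prod_range_sub_natCast_le s m
  have hsum := multinomialShiftNormSum_le (α := α) (D := D) hδ hτ₀ hτ hm fun w hw =>
    (hD w (hs.trans_le hw)) ▸ norm_tsum_mul_cpow_le hd hdδ (hb _ hs) hw
  calc _ ≤ (∏ j ∈ range m, (‖s‖ + j)) / m.factorial *
        ((∑' n, ‖b n‖ * d n ^ (σ * s.re + T)) * δ ^ (-T) * (∑ j, ‖α j‖ * δ ^ τ j) ^ m) :=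
        mul_le_mul hpoch hsum (multinomialShiftNormSum_nonneg s m) (by positivity)
    _ = _ := by ring

variable (hσ : 0 < σ) (hq : ∑ j, ‖α j‖ * δ ^ τ j < 1) {L : ℕ} (hL : ⌈T / τ₀⌉₊ ≤ L)
include hσ hq hL

theorem summable_norm_tail {s : ℂ} (hs : (S₀ - T) / σ < s.re) :
    Summable fun k : ℕ => ‖(∏ j ∈ range (k + L), (s - j)) / ((k + L).factorial : ℂ)‖ *
      multinomialShiftNormSum α τ σ D s (k + L) := by
  have hδ : 0 < δ := (hd 0).trans_le (hdδ 0)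
  have hs' : S₀ < σ * s.re + T := by rw [div_lt_iff₀' hσ] at hs; linarith
  have hmaj := ((summable_nat_add_iff L).2 (summable_prod_range_add_div_factorial_mul_pow
    (norm_nonneg s) (by positivity) hq)).mul_left
      ((∑' n, ‖b n‖ * d n ^ (σ * s.re + T)) * δ ^ (-T))
  refine hmaj.of_nonneg_of_le (fun k => ?_) fun k => ?_
  · exact mul_nonneg (norm_nonneg _) (multinomialShiftNormSum_nonneg s _)
  · exact norm_prod_div_factorial_mul_multinomialShiftNormSum_le hd hdδ hb hD hτ₀ hτ hs'
      (hL.trans (Nat.le_add_left L k))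

theorem differentiableOn_tsum_tail :
    DifferentiableOn ℂ (fun s : ℂ => ∑' k : ℕ, (∏ j ∈ range (k + L), (s - j)) /
      ((k + L).factorial : ℂ) * multinomialShiftSum α τ σ D s (k + L))
      {s : ℂ | (S₀ - T) / σ < s.re} := by
  have hδ : 0 < δ := (hd 0).trans_le (hdδ 0)
  have hDdiff : DifferentiableOn ℂ D {w : ℂ | S₀ < w.re} :=
    (differentiableOn_tsum_mul_cpow hd hb).congr fun w hw => hD w hw
  refine differentiableOn_of_locally_differentiableOn fun s₀ hs₀ => ?_
  obtain ⟨θ, hθ, hθs₀⟩ := exists_between (show (S₀ - T) / σ < s₀.re from hs₀)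
  set R := ‖s₀‖ + 1
  set U := {s : ℂ | θ < s.re ∧ ‖s‖ < R}
  have hU : IsOpen U := (isOpen_lt continuous_const Complex.continuous_re).inter
    (isOpen_lt continuous_norm continuous_const)
  have hS₀ : S₀ < σ * θ + T := by rw [div_lt_iff₀' hσ] at hθ; linarith
  have ht : ∀ s ∈ U, σ * θ + T ≤ σ * s.re + T ∧ σ * s.re + T ≤ σ * R + T := fun s hs =>
    ⟨by gcongr; exact hs.1.le, by gcongr; exact (Complex.re_le_norm s).trans hs.2.le⟩
  have hmaj := ((summable_nat_add_iff L).2 (summable_prod_range_add_div_factorial_mul_pow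
    (R := R) (by positivity) (by positivity) hq)).mul_left
      ((∑' n, ‖b n‖ * d n ^ (σ * θ + T) + ∑' n, ‖b n‖ * d n ^ (σ * R + T)) * δ ^ (-T))
  refine ⟨U, hU, ⟨hθs₀, lt_add_one _⟩, (Complex.differentiableOn_tsum_of_summable_norm hmaj
    (fun k => ?_) hU fun k s hs => ?_).mono Set.inter_subset_right⟩
  · have hm : ⌈T / τ₀⌉₊ ≤ k + L := hL.trans (Nat.le_add_left L k)
    refine (((Differentiable.fun_finsetProd fun j _ => differentiable_id.sub_const _).div_const
      _).differentiableOn).mul ((differentiableOn_multinomialShiftSum hτ₀ hτ hm hDdiff).mono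
      fun s hs => hS₀.trans_le (ht s hs).1)
  · have hs' : S₀ < σ * s.re + T := hS₀.trans_le (ht s hs).1
    rw [norm_mul]
    calc _ ≤ _ := mul_le_mul_of_nonneg_left (norm_multinomialShiftSum_le s _) (norm_nonneg _)
      _ ≤ _ := norm_prod_div_factorial_mul_multinomialShiftNormSum_le hd hdδ hb hD hτ₀ hτ hs'
          (hL.trans (Nat.le_add_left L k))
      _ ≤ _ := by
        gcongr
        · exact mul_nonneg (add_nonneg (tsum_norm_mul_rpow_nonneg hd _)
            (tsum_norm_mul_rpow_nonneg hd _)) (by positivity)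
        · exact tsum_norm_mul_rpow_le_add hd (hb _ hS₀) (hb _ (hS₀.trans_le ((ht s hs).1.trans
            (ht s hs).2))) (ht s hs).1 (ht s hs).2
        · exact hs.2.le

end Tail

theorem main_term_tail_holomorphic_general (a : ℕ → ℂ) (c : ℕ → ℝ) (hc : ∀ n, 0 < c n)
    (S₀ : ℝ) (N : ℕ) (α : Fin N → ℂ) (σs : Fin (N + 1) → ℝ)
    (hσs : StrictMono σs) (hσs0 : 0 < σs 0) (σ : ℝ) (hσ : 0 < σ)
    (δ : ℝ) (ν : ℕ) (hcδ : ∀ n, ν ≤ n → c n < δ)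
    (hsum : ∀ t : ℝ, S₀ < t → Summable (fun n : ℕ => ‖a n‖ * c n ^ t))
    (hsmall : ∑ j, ‖α j‖ * δ ^ σs j.castSucc ≤ 1 / 2)
    (Dν : ℂ → ℂ)
    (hDν : ∀ w : ℂ, S₀ < w.re → Dν w = ∑' n : ℕ, a (n + ν) * ((c (n + ν) : ℂ)) ^ w) :
    (∀ s : ℂ, (S₀ - σs (Fin.last N)) / σ < s.re →
      Summable (fun k : ℕ =>
        ‖(∏ j ∈ Finset.range (k + ⌈σs (Fin.last N) / σs 0⌉₊ + 1), (s - j)) /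
            ((k + ⌈σs (Fin.last N) / σs 0⌉₊ + 1).factorial : ℂ)‖ *
          ∑ f ∈ Finset.Nat.antidiagonalTuple N (k + ⌈σs (Fin.last N) / σs 0⌉₊ + 1),
            (Nat.multinomial Finset.univ f : ℝ) * (∏ j, ‖α j‖ ^ f j) *
              ‖Dν ((σ : ℂ) * s + ((∑ j, σs j.castSucc * (f j : ℝ) : ℝ) : ℂ))‖)) ∧
    DifferentiableOn ℂ
      (fun s : ℂ => ∑' k : ℕ,
        ((∏ j ∈ Finset.range (k + ⌈σs (Fin.last N) / σs 0⌉₊ + 1), (s - j)) /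
            ((k + ⌈σs (Fin.last N) / σs 0⌉₊ + 1).factorial : ℂ)) *
          ∑ f ∈ Finset.Nat.antidiagonalTuple N (k + ⌈σs (Fin.last N) / σs 0⌉₊ + 1),
            (Nat.multinomial Finset.univ f : ℂ) * (∏ j, α j ^ f j) *
              Dν ((σ : ℂ) * s + ((∑ j, σs j.castSucc * (f j : ℝ) : ℝ) : ℂ)))
      {s : ℂ | (S₀ - σs (Fin.last N)) / σ < s.re} := by
  have hd : ∀ n, 0 < c (n + ν) := fun n => hc _
  have hdδ : ∀ n, c (n + ν) ≤ δ := fun n => (hcδ _ (Nat.le_add_left ν n)).le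
  have hb : ∀ t, S₀ < t → Summable fun n => ‖a (n + ν)‖ * c (n + ν) ^ t := fun t ht =>
    (summable_nat_add_iff ν).2 (hsum t ht)
  have hτ : ∀ j : Fin N, σs 0 ≤ σs j.castSucc := fun j => hσs.monotone (Fin.zero_le _)
  have hq : ∑ j, ‖α j‖ * δ ^ σs j.castSucc < 1 := hsmall.trans_lt (by norm_num)
  have hL := Nat.le_succ ⌈σs (Fin.last N) / σs 0⌉₊
  simp only [add_assoc]
  exact ⟨fun s hs => summable_norm_tail hd hdδ hb hDν hσs0 hτ hσ hq hL hs,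
    differentiableOn_tsum_tail hd hdδ hb hDν hσs0 hτ hσ hq hL⟩

/-- The tail k > k* of the main term series
∑_k ((s)_k/k!) ∑_{k⃗} A(k⃗,{α_j}) D_ν(σs + σ⃗·k⃗) converges absolutely and is
holomorphic on the half-plane Re(s) > (S₀ - σ_{N+1})/σ. -/
theorem main_term_tail_holomorphic (a : ℕ → ℂ) (c : ℕ → ℝ) (hc : ∀ n, 0 < c n)
    (S₀ : ℝ) (N : ℕ) (α : Fin N → ℂ) (σs : Fin (N + 1) → ℝ)
    (hσs : StrictMono σs) (hσs0 : 0 < σs 0) (σ : ℝ) (hσ : 0 < σ)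
    (δ : ℝ) (hδ : 0 < δ) (ν : ℕ) (hcδ : ∀ n, ν ≤ n → c n < δ)
    (hsum : ∀ t : ℝ, S₀ < t → Summable (fun n : ℕ => ‖a n‖ * c n ^ t))
    (hsmall : ∑ j, ‖α j‖ * δ ^ σs j.castSucc ≤ 1 / 2)
    (Dν : ℂ → ℂ)
    (hDν : ∀ w : ℂ, S₀ < w.re → Dν w = ∑' n : ℕ, a (n + ν) * ((c (n + ν) : ℂ)) ^ w) :
    (∀ s : ℂ, (S₀ - σs (Fin.last N)) / σ < s.re →
      Summable (fun k : ℕ =>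
        ‖(∏ j ∈ Finset.range (k + ⌈σs (Fin.last N) / σs 0⌉₊ + 1), (s - j)) /
            ((k + ⌈σs (Fin.last N) / σs 0⌉₊ + 1).factorial : ℂ)‖ *
          ∑ f ∈ Finset.Nat.antidiagonalTuple N (k + ⌈σs (Fin.last N) / σs 0⌉₊ + 1),
            (Nat.multinomial Finset.univ f : ℝ) * (∏ j, ‖α j‖ ^ f j) *
              ‖Dν ((σ : ℂ) * s + ((∑ j, σs j.castSucc * (f j : ℝ) : ℝ) : ℂ))‖)) ∧
    DifferentiableOn ℂ
      (fun s : ℂ => ∑' k : ℕ,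
        ((∏ j ∈ Finset.range (k + ⌈σs (Fin.last N) / σs 0⌉₊ + 1), (s - j)) /
            ((k + ⌈σs (Fin.last N) / σs 0⌉₊ + 1).factorial : ℂ)) *
          ∑ f ∈ Finset.Nat.antidiagonalTuple N (k + ⌈σs (Fin.last N) / σs 0⌉₊ + 1),
            (Nat.multinomial Finset.univ f : ℂ) * (∏ j, α j ^ f j) *
              Dν ((σ : ℂ) * s + ((∑ j, σs j.castSucc * (f j : ℝ) : ℝ) : ℂ)))
      {s : ℂ | (S₀ - σs (Fin.last N)) / σ < s.re} :=
  main_term_tail_holomorphic_general a c hc S₀ N α σs hσs hσs0 σ hσ δ ν hcδ hsum hsmall Dν hDν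
end
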